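/- If L is regular, then L_{1/2} = {x | ∃y, |x| = |y| and xy ∈ L} (the set of first halves of words in L) is regular. -/

import Mathlib

/-!
Run a DFA `M` for `L` on `x` while also tracking the set `Tₙ` of states from which some word of
length `n = |x|` leads to acceptance; `T₀` is the accepting set and `Tₙ₊₁` is the one-step
predecessor set of `Tₙ`, so the pair is computed by a DFA on `σ × Set σ`. The word `x` is a first
half of a word of `L` exactly when the state of `M` after `x` lies in `T_{|x|}`.
-/

def Language.firstHalves {α : Type*} (L : Language α) : Language α :=
  {x | ∃ y : List α, x.length = y.length ∧ x ++ y ∈ L}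

namespace DFA

variable {α σ : Type*} (M : DFA α σ)

def stepPreimage (T : Set σ) : Set σ :=
  {s | ∃ a, M.step s a ∈ T}

theorem mem_stepPreimage_iterate (n : ℕ) (T : Set σ) (s : σ) :
    s ∈ M.stepPreimage^[n] T ↔ ∃ y : List α, y.length = n ∧ M.evalFrom s y ∈ T := by
  induction n generalizing s with
  | zero => simp [List.length_eq_zero_iff]
  | succ n ih =>
    rw [Function.iterate_succ_apply']
    constructor
    · rintro ⟨a, ha⟩
      obtain ⟨y, rfl, hy⟩ := (ih _).mp ha
      exact ⟨a :: y, rfl, hy⟩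
    · rintro ⟨_ | ⟨a, y⟩, hlen, hy⟩
      · simp at hlen
      · exact ⟨a, (ih _).mpr ⟨y, by simpa using hlen, hy⟩⟩

def firstHalves : DFA α (σ × Set σ) where
  step p a := (M.step p.1 a, M.stepPreimage p.2)
  start := (M.start, M.accept)
  accept := {p | p.1 ∈ p.2}

theorem firstHalves_evalFrom (x : List α) (s : σ) (T : Set σ) :
    M.firstHalves.evalFrom (s, T) x = (M.evalFrom s x, M.stepPreimage^[x.length] T) := by
  induction x generalizing s T with
  | nil => rfl
  | cons a x ih => exact (ih _ _).trans (by rw [List.length_cons, Function.iterate_succ_apply]; rfl)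

theorem accepts_firstHalves : M.firstHalves.accepts = M.accepts.firstHalves := by
  ext x
  change M.firstHalves.evalFrom (M.start, M.accept) x ∈ M.firstHalves.accept ↔ _
  rw [firstHalves_evalFrom]
  change M.evalFrom M.start x ∈ M.stepPreimage^[x.length] M.accept ↔
    ∃ y : List α, x.length = y.length ∧ M.evalFrom M.start (x ++ y) ∈ M.accept
  simp only [mem_stepPreimage_iterate, evalFrom_of_append, eq_comm]

end DFA

/-- If `L` is regular, then the language of first halves of words in `L` is regular. -/
theorem regular_firstHalf {α : Type} (L : Language α) (h : L.IsRegular) :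
    Language.IsRegular {x | ∃ y : List α, x.length = y.length ∧ x ++ y ∈ L} := by
  obtain ⟨σ, _, M, rfl⟩ := h
  exact ⟨σ × Set σ, inferInstance, M.firstHalves, M.accepts_firstHalves⟩
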